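/- Over an algebraically closed field F, the 5-dimensional evolution algebras E_{5,19} : e₁² = e₂, e₂² = e₃² = e₄, e₄² = e₅ and E_{5,20} : e₁² = e₂, e₂² = e₄, e₃² = e₄ + e₅, e₄² = e₅ are not isomorphic. -/

import Mathlib

/-!
In `E₅,₁₉` an element `u` with `u² = 0` has no `e₁`- and `e₄`-component, so `u · z` always lies
in the line `F e₄`. In `E₅,₂₀`, with `i² = -1`, the element `x = i e₂ + e₃ + i e₄` squares to zero,
yet `x e₃ = e₄ + e₅` and `x e₄ = i e₅` are linearly independent. An isomorphism would map the
products by `σ⁻¹ x` in `E₅,₁₉` onto the products by `x` in `E₅,₂₀`.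
-/

/-- Multiplication of `E₅,₁₉ : e₁² = e₂, e₂² = e₃² = e₄, e₄² = e₅` on `F⁵`. -/
def mulE519 {F : Type*} [Field F] : (Fin 5 → F) → (Fin 5 → F) → (Fin 5 → F) :=
  fun x y => ![0, x 0 * y 0, 0, x 1 * y 1 + x 2 * y 2, x 3 * y 3]

/-- Multiplication of `E₅,₂₀ : e₁² = e₂, e₂² = e₄, e₃² = e₄ + e₅, e₄² = e₅` on `F⁵`. -/
def mulE520 {F : Type*} [Field F] : (Fin 5 → F) → (Fin 5 → F) → (Fin 5 → F) :=
  fun x y => ![0, x 0 * y 0, 0, x 1 * y 1 + x 2 * y 2, x 2 * y 2 + x 3 * y 3]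

theorem LinearIndependent.notMem_span_singleton_of_mem {R M : Type*} [CommRing R]
    [Nontrivial R] [AddCommGroup M] [Module R M] {x y w : M} (h : LinearIndependent R ![x, y])
    (hx : x ∈ R ∙ w) : y ∉ R ∙ w := by
  intro hy
  obtain ⟨a, rfl⟩ := Submodule.mem_span_singleton.mp hx
  obtain ⟨b, rfl⟩ := Submodule.mem_span_singleton.mp hy
  have hab := (LinearIndependent.pair_iff.mp h b (-a) (by
    rw [smul_smul, smul_smul, neg_mul, mul_comm, neg_smul, add_neg_cancel])).2
  exact h.ne_zero 0 (by simp [neg_eq_zero.mp hab])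

theorem mem_span_singleton_of_mul_self_eq_zero_of_equiv {K V W : Type*} [Semiring K]
    [AddCommMonoid V] [AddCommMonoid W] [Module K V] [Module K W]
    {m : V → V → V} {n : W → W → W} (σ : V ≃ₗ[K] W)
    (hσ : ∀ x y, σ (m x y) = n (σ x) (σ y)) {v : V}
    (hm : ∀ u, m u u = 0 → ∀ z, m u z ∈ K ∙ v) {x : W} (hx : n x x = 0) (z : W) :
    n x z ∈ K ∙ σ v := by
  have hu : m (σ.symm x) (σ.symm x) = 0 :=
    σ.injective (by rw [hσ, σ.apply_symm_apply, hx, map_zero])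
  obtain ⟨c, hc⟩ := Submodule.mem_span_singleton.mp (hm _ hu (σ.symm z))
  refine Submodule.mem_span_singleton.mpr ⟨c, ?_⟩
  rw [← map_smul, hc, hσ, σ.apply_symm_apply, σ.apply_symm_apply]

theorem mulE519_mem_span_single_of_mul_self_eq_zero {F : Type*} [Field F]
    {u : Fin 5 → F} (hu : mulE519 u u = 0) (z : Fin 5 → F) :
    mulE519 u z ∈ F ∙ Pi.single 3 1 := by
  have hu0 : u 0 = 0 := by simpa [mulE519] using congrFun hu 1
  have hu3 : u 3 = 0 := by simpa [mulE519] using congrFun hu 4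
  refine Submodule.mem_span_singleton.mpr ⟨u 1 * z 1 + u 2 * z 2, ?_⟩
  ext j
  fin_cases j <;> simp [mulE519, hu0, hu3]

section E520

variable {F : Type*} [Field F] {i : F}

theorem mulE520_mul_self_eq_zero (hi : i * i = -1) :
    mulE520 ![0, i, 1, i, 0] ![0, i, 1, i, 0] = 0 := by
  ext j
  fin_cases j <;> simp [mulE520] <;> linear_combination hi

theorem linearIndependent_mulE520 (hi : i * i = -1) :
    LinearIndependent F ![mulE520 ![0, i, 1, i, 0] (Pi.single 2 1),
      mulE520 ![0, i, 1, i, 0] (Pi.single 3 1)] := by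
  have hi0 : i ≠ 0 := by rintro rfl; simp at hi
  refine LinearIndependent.pair_iff.mpr fun s t hst => ?_
  have hs : s = 0 := by simpa [mulE520] using congrFun hst 3
  have ht : t * i = 0 := by simpa [mulE520, hs] using congrFun hst 4
  exact ⟨hs, (mul_eq_zero.mp ht).resolve_right hi0⟩

end E520

/-- Over an algebraically closed field `F`, the 5-dimensional evolution
algebras `E₅,₁₉` and `E₅,₂₀` are not isomorphic. -/
theorem stmt18 {F : Type*} [Field F] [IsAlgClosed F] :
    ¬ ∃ σ : (Fin 5 → F) ≃ₗ[F] (Fin 5 → F),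
        ∀ x y, σ (mulE519 x y) = mulE520 (σ x) (σ y) := by
  rintro ⟨σ, hσ⟩
  obtain ⟨i, hi⟩ := IsAlgClosed.exists_eq_mul_self (-1 : F)
  have hline := mem_span_singleton_of_mul_self_eq_zero_of_equiv σ hσ
    (fun _ => mulE519_mem_span_single_of_mul_self_eq_zero)
    (mulE520_mul_self_eq_zero hi.symm)
  exact (linearIndependent_mulE520 hi.symm).notMem_span_singleton_of_mem (hline _) (hline _)
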